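/- arXiv:2410.23811 — 3 statements merged into one kernel-verified Lean document; each statement's English description precedes it below -/
import Mathlib

section
/- Let L and c be positive integers and let δ be a real number with 0 ≤ δ ≤ 1/(2L). Then ∑_{k=−(c−1)}^{c−1} |F_L(k/L + δ)|² ≥ 1 − 1/c. -/
/-- The averaged geometric phase sum `F_L(x) = (1/L) ∑_{j=0}^{L-1} exp(2πi x j)`. -/
noncomputable def avgPhaseSum (L : ℕ) (x : ℝ) : ℂ :=
  (L : ℂ)⁻¹ * ∑ j ∈ Finset.range L, Complex.exp (2 * Real.pi * Complex.I * x * j)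

/-!
Write `f k = ‖F_L (k / L + δ)‖ ^ 2`. Up to the factor `1 / L`, the values `F_L (y + i / L)` for
`i < L` are the discrete Fourier transform of the unimodular vector `(e^{2πiyj})_{j<L}`, so Parseval
makes any `L` consecutive values of `f` sum to one. Using the window `-c + 1, …, L - c`, it remains
to show that the values for `c ≤ k ≤ L - c` total at most `1 / c`. There the bound
`|F_L x| ≤ 1 / (L |sin πx|)` and Jordan's inequality `sin πx ≥ 2 min x (1 - x)` give
`f k ≤ (2k - 1)⁻² + (2(L - k) - 1)⁻²`, and `∑_{k ≥ c} (2k - 1)⁻² ≤ 1 / (4(c - 1))` telescopes,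
so the tail is at most `1 / (2(c - 1)) ≤ 1 / c` once `c ≥ 2`.
-/

open Finset Complex
open scoped Real ComplexConjugate

lemma Int.sum_Ico_add_eq_sum_range {M : Type*} [AddCommMonoid M] (f : ℤ → M) (a : ℤ) (n : ℕ) :
    ∑ k ∈ Ico a (a + n), f k = ∑ i ∈ Finset.range n, f (a + i) := by
  refine sum_nbij' (fun k => (k - a).toNat) (fun i => a + i) ?_ ?_ ?_ ?_ ?_ <;>
    intro k hk <;> simp only [mem_Ico, mem_range] at hk ⊢ <;> first | omega | (congr 1; omega)

lemma Int.sum_Icc_reflect {M : Type*} [AddCommMonoid M] (f : ℤ → M) (a b : ℤ) :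
    ∑ k ∈ Icc a b, f (a + b - k) = ∑ k ∈ Icc a b, f k := by
  refine sum_nbij' (a + b - ·) (a + b - ·) ?_ ?_ ?_ ?_ (fun _ _ => rfl) <;>
    intro k hk <;> simp only [mem_Icc] at hk ⊢ <;> omega

lemma two_mul_min_le_sin_pi_mul {x : ℝ} (h0 : 0 ≤ x) (h1 : x ≤ 1) :
    2 * min x (1 - x) ≤ Real.sin (π * x) := by
  have jordan : ∀ t : ℝ, 0 ≤ t → t ≤ 1 / 2 → 2 * t ≤ Real.sin (π * t) := fun t ht0 ht1 => by
    have := Real.mul_le_sin (x := π * t) (by positivity) (by nlinarith [Real.pi_pos])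
    rwa [← mul_assoc, div_mul_cancel₀ _ Real.pi_ne_zero] at this
  rcases le_total x (1 / 2) with h | h
  · exact (mul_le_mul_of_nonneg_left (min_le_left _ _) zero_le_two).trans (jordan x h0 h)
  · calc 2 * min x (1 - x) ≤ 2 * (1 - x) := by gcongr; exact min_le_right _ _
      _ ≤ Real.sin (π * (1 - x)) := jordan _ (by linarith) (by linarith)
      _ = Real.sin (π * x) := by rw [mul_one_sub, Real.sin_pi_sub]

lemma norm_exp_two_pi_mul_I_mul_sub_one (x : ℝ) :
    ‖exp (2 * π * I * x) - 1‖ = 2 * |Real.sin (π * x)| := by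
  have h := norm_exp_I_mul_ofReal_sub_one (2 * π * x)
  rw [show I * ((2 * π * x : ℝ) : ℂ) = 2 * π * I * x by push_cast; ring] at h
  rw [h, norm_mul, Real.norm_two, Real.norm_eq_abs]
  ring_nf

lemma IsPrimitiveRoot.geom_sum_pow_div_pow {ζ : ℂ} {L : ℕ} (hζ : IsPrimitiveRoot ζ L) {j j' : ℕ}
    (hj : j < L) (hj' : j' < L) :
    ∑ i ∈ range L, (ζ ^ j / ζ ^ j') ^ i = if j = j' then (L : ℂ) else 0 := by
  have hζ0 : ζ ≠ 0 := hζ.ne_zero (by omega)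
  split_ifs with h
  · simp [h, hζ0]
  · have hu : ζ ^ j / ζ ^ j' ≠ 1 := fun h' =>
      h (hζ.pow_inj hj hj' ((div_eq_one_iff_eq (pow_ne_zero _ hζ0)).mp h'))
    rw [geom_sum_eq hu, div_pow, ← pow_mul, ← pow_mul, mul_comm j, mul_comm j', pow_mul, pow_mul,
      hζ.pow_eq_one]
    simp

theorem IsPrimitiveRoot.sum_sq_norm_sum_mul_pow {ζ : ℂ} {L : ℕ} (hζ : IsPrimitiveRoot ζ L)
    (a : ℕ → ℂ) :
    ∑ i ∈ range L, ‖∑ j ∈ range L, a j * ζ ^ (i * j)‖ ^ 2 = L * ∑ j ∈ range L, ‖a j‖ ^ 2 := by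
  rcases L.eq_zero_or_pos with rfl | hL
  · simp
  have hconj : ∀ i j' : ℕ, conj (ζ ^ (i * j')) = (ζ ^ (i * j'))⁻¹ := fun i j' =>
    (inv_eq_conj (by rw [norm_pow, hζ.norm'_eq_one hL.ne', one_pow])).symm
  apply ofReal_injective
  push_cast
  calc ∑ i ∈ range L, ((‖∑ j ∈ range L, a j * ζ ^ (i * j)‖ : ℂ)) ^ 2
      = ∑ j ∈ range L, ∑ j' ∈ range L,
          a j * conj (a j') * ∑ i ∈ range L, (ζ ^ j / ζ ^ j') ^ i := by
        simp_rw [← mul_conj', map_sum, map_mul, hconj, sum_mul_sum, mul_sum]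
        rw [sum_comm]
        refine sum_congr rfl fun j _ => ?_
        rw [sum_comm]
        refine sum_congr rfl fun j' _ => sum_congr rfl fun i _ => ?_
        rw [div_pow, ← pow_mul, ← pow_mul, mul_comm j, mul_comm j']
        ring
    _ = ∑ j ∈ range L, a j * conj (a j) * L := by
        refine sum_congr rfl fun j hj => ?_
        rw [sum_congr rfl fun j' hj' => by
          rw [hζ.geom_sum_pow_div_pow (mem_range.mp hj) (mem_range.mp hj'), mul_ite, mul_zero]]
        rw [sum_ite_eq, if_pos hj]
    _ = L * ∑ j ∈ range L, (‖a j‖ : ℂ) ^ 2 := by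
        rw [mul_sum]
        exact sum_congr rfl fun j _ => by rw [mul_conj', mul_comm]

lemma avgPhaseSum_eq_geom_sum (L : ℕ) (x : ℝ) :
    avgPhaseSum L x = (L : ℂ)⁻¹ * ∑ j ∈ range L, exp (2 * π * I * x) ^ j := by
  simp only [avgPhaseSum, ← exp_nat_mul]
  congr 1
  exact sum_congr rfl fun j _ => by ring_nf

lemma norm_avgPhaseSum (L : ℕ) {x : ℝ} (hx : Real.sin (π * x) ≠ 0) :
    ‖avgPhaseSum L x‖ = |Real.sin (π * (L * x))| / (L * |Real.sin (π * x)|) := by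
  have hz : exp (2 * π * I * x) ≠ 1 := by
    rw [← sub_ne_zero, ← norm_ne_zero_iff, norm_exp_two_pi_mul_I_mul_sub_one]
    positivity
  rw [avgPhaseSum_eq_geom_sum, geom_sum_eq hz, ← exp_nat_mul,
    show (L : ℂ) * (2 * π * I * x) = 2 * π * I * ((L * x : ℝ) : ℂ) by push_cast; ring,
    norm_mul, norm_div, norm_inv, norm_natCast, norm_exp_two_pi_mul_I_mul_sub_one,
    norm_exp_two_pi_mul_I_mul_sub_one]
  ring

lemma sq_norm_avgPhaseSum_le (L : ℕ) {x : ℝ} (hx : Real.sin (π * x) ≠ 0) :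
    ‖avgPhaseSum L x‖ ^ 2 ≤ 1 / (L * Real.sin (π * x)) ^ 2 := by
  rw [norm_avgPhaseSum L hx, div_pow, mul_pow, sq_abs, sq_abs, ← mul_pow]
  gcongr
  exact Real.sin_sq_le_one _

lemma sum_sq_norm_avgPhaseSum_add_div {L : ℕ} (hL : 0 < L) (y : ℝ) :
    ∑ i ∈ range L, ‖avgPhaseSum L (y + i / L)‖ ^ 2 = 1 := by
  have hζ := isPrimitiveRoot_exp L hL.ne'
  have hterm : ∀ i : ℕ, avgPhaseSum L (y + i / L) = (L : ℂ)⁻¹ *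
      ∑ j ∈ range L, exp (2 * π * I * y) ^ j * exp (2 * π * I / L) ^ (i * j) := by
    intro i
    rw [avgPhaseSum_eq_geom_sum]
    refine congrArg _ (sum_congr rfl fun j _ => ?_)
    rw [pow_mul, ← mul_pow]
    congr 1
    rw [← exp_nat_mul, ← exp_add]
    push_cast
    ring_nf
  have hw : ∀ j : ℕ, ‖exp (2 * π * I * y) ^ j‖ = 1 := fun j => by
    rw [norm_pow, norm_exp]
    simp
  simp_rw [hterm, norm_mul, mul_pow, ← mul_sum, hζ.sum_sq_norm_sum_mul_pow, hw]
  rw [one_pow, sum_const, card_range, nsmul_one, norm_inv, norm_natCast]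
  field_simp

lemma sum_Ico_sq_norm_avgPhaseSum {L : ℕ} (hL : 0 < L) (δ : ℝ) (a : ℤ) :
    ∑ k ∈ Ico a (a + L), ‖avgPhaseSum L (k / L + δ)‖ ^ 2 = 1 := by
  rw [Int.sum_Ico_add_eq_sum_range, ← sum_sq_norm_avgPhaseSum_add_div hL (a / L + δ)]
  refine sum_congr rfl fun i _ => ?_
  push_cast
  ring_nf

lemma sq_norm_avgPhaseSum_le_of_mem_Icc {L : ℕ} {k x : ℝ} (hk : 1 / 2 < k) (hkL : k + 1 / 2 < L)
    (hx : L * x ∈ Set.Icc k (k + 1 / 2)) :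
    ‖avgPhaseSum L x‖ ^ 2 ≤ 1 / (2 * k - 1) ^ 2 + 1 / (2 * (L - k) - 1) ^ 2 := by
  obtain ⟨hx0, hx1⟩ := hx
  have hL : (0 : ℝ) < L := by linarith
  have hx0' : 0 < x := pos_of_mul_pos_right (by linarith) hL.le
  have hx1' : x < 1 := by nlinarith
  set m := min (2 * k - 1) (2 * (L - k) - 1)
  have hm : 0 < m := lt_min (by linarith) (by linarith)
  have hsin : m ≤ L * Real.sin (π * x) := by
    refine le_trans ?_ (mul_le_mul_of_nonneg_left (two_mul_min_le_sin_pi_mul hx0'.le hx1'.le) hL.le)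
    rcases min_cases x (1 - x) with ⟨h, _⟩ | ⟨h, _⟩ <;> rw [h]
    · linarith [min_le_left (2 * k - 1) (2 * (L - k) - 1)]
    · linarith [min_le_right (2 * k - 1) (2 * (L - k) - 1)]
  calc ‖avgPhaseSum L x‖ ^ 2 ≤ 1 / (L * Real.sin (π * x)) ^ 2 :=
        sq_norm_avgPhaseSum_le L (by nlinarith)
    _ ≤ 1 / m ^ 2 := by gcongr
    _ ≤ 1 / (2 * k - 1) ^ 2 + 1 / (2 * (L - k) - 1) ^ 2 := by
        rcases min_cases (2 * k - 1) (2 * (L - k) - 1) with ⟨h, _⟩ | ⟨h, _⟩ <;>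
          simp only [m, h, le_add_iff_nonneg_left, le_add_iff_nonneg_right] <;> positivity

lemma sum_Icc_one_div_two_mul_sub_one_sq_le {c : ℤ} (hc : 2 ≤ c) (n : ℤ) :
    ∑ k ∈ Icc c n, 1 / (2 * (k : ℝ) - 1) ^ 2 ≤ 1 / (4 * ((c : ℝ) - 1)) := by
  have hc' : (2 : ℝ) ≤ c := by exact_mod_cast hc
  rcases lt_or_ge n (c - 1) with hn | hn
  · rw [Icc_eq_empty (by omega), sum_empty]
    exact div_nonneg zero_le_one (by linarith)
  -- Each term is at most `1 / (4 (k - 1)) - 1 / (4 k)`, since `4 k (k - 1) ≤ (2 k - 1) ^ 2`.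
  suffices h : ∑ k ∈ Icc c n, 1 / (2 * (k : ℝ) - 1) ^ 2 ≤ 1 / (4 * ((c : ℝ) - 1)) - 1 / (4 * n) by
    have : (0 : ℝ) ≤ 1 / (4 * n) := by
      have : (c : ℝ) - 1 ≤ n := by exact_mod_cast hn
      exact div_nonneg zero_le_one (by linarith)
    linarith
  induction n, hn using Int.leInduction with
  | base => simp
  | succ n hn ih =>
    have hn' : (1 : ℝ) ≤ n := by exact_mod_cast (show (1 : ℤ) ≤ n by omega)
    rw [← insert_Icc_right_eq_Icc_add_one (by omega), sum_insert (by simp), add_comm]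
    have hstep : 1 / (2 * ((n + 1 : ℤ) : ℝ) - 1) ^ 2 ≤
        1 / (4 * (n : ℝ)) - 1 / (4 * ((n + 1 : ℤ) : ℝ)) := by
      push_cast
      rw [div_sub_div _ _ (by positivity) (by positivity),
        div_le_div_iff₀ (by nlinarith) (by positivity)]
      nlinarith
    linarith

lemma sum_Icc_sq_norm_avgPhaseSum_le {L : ℕ} {c : ℤ} (hc : 2 ≤ c) {δ : ℝ} (hδ0 : 0 ≤ δ)
    (hδ1 : δ ≤ 1 / (2 * L)) :
    ∑ k ∈ Icc c (L - c), ‖avgPhaseSum L (k / L + δ)‖ ^ 2 ≤ 1 / c := by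
  have hc' : (2 : ℝ) ≤ c := by exact_mod_cast hc
  have hpoint : ∀ k ∈ Icc c (L - c), ‖avgPhaseSum L (k / L + δ)‖ ^ 2 ≤
      1 / (2 * (k : ℝ) - 1) ^ 2 + 1 / (2 * ((L : ℝ) - k) - 1) ^ 2 := by
    intro k hk
    have hk : (c : ℝ) ≤ k ∧ (k : ℝ) ≤ L - c := by
      rw [mem_Icc] at hk
      exact ⟨by exact_mod_cast hk.1, by exact_mod_cast hk.2⟩
    have hL : (0 : ℝ) < L := by linarith
    have hδL0 : 0 ≤ L * δ := mul_nonneg hL.le hδ0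
    have hδL : L * δ ≤ 1 / 2 := by
      calc L * δ ≤ L * (1 / (2 * L)) := by gcongr
        _ = 1 / 2 := by field_simp
    refine sq_norm_avgPhaseSum_le_of_mem_Icc (by linarith) (by linarith) ⟨?_, ?_⟩ <;>
      rw [mul_add, mul_div_cancel₀ _ hL.ne'] <;> linarith
  have hreflect : ∑ k ∈ Icc c (L - c), 1 / (2 * ((L : ℝ) - k) - 1) ^ 2 =
      ∑ k ∈ Icc c (L - c), 1 / (2 * (k : ℝ) - 1) ^ 2 := by
    rw [← Int.sum_Icc_reflect _ c]
    refine sum_congr rfl fun k _ => ?_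
    push_cast
    ring_nf
  calc ∑ k ∈ Icc c (L - c), ‖avgPhaseSum L (k / L + δ)‖ ^ 2
      ≤ ∑ k ∈ Icc c (L - c), (1 / (2 * (k : ℝ) - 1) ^ 2 + 1 / (2 * ((L : ℝ) - k) - 1) ^ 2) :=
        sum_le_sum hpoint
    _ = 2 * ∑ k ∈ Icc c (L - c), 1 / (2 * (k : ℝ) - 1) ^ 2 := by
        rw [sum_add_distrib, hreflect, two_mul]
    _ ≤ 2 * (1 / (4 * ((c : ℝ) - 1))) := by
        gcongr
        exact sum_Icc_one_div_two_mul_sub_one_sq_le hc _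
    _ ≤ 1 / c := by
        rw [mul_one_div, div_le_div_iff₀ (by linarith) (by linarith)]
        linarith

/-- Almost-identity property: for positive integers `L, c` and `0 ≤ δ ≤ 1/(2L)`,
`∑_{k=-(c-1)}^{c-1} |F_L(k/L + δ)|² ≥ 1 − 1/c`. -/
theorem sum_abs_avgPhaseSum_sq_ge (L c : ℕ) (hL : 0 < L) (hc : 0 < c)
    (δ : ℝ) (hδ0 : 0 ≤ δ) (hδ1 : δ ≤ 1 / (2 * L)) :
    1 - 1 / (c : ℝ) ≤
      ∑ k ∈ Finset.Icc (-(c : ℤ) + 1) ((c : ℤ) - 1),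
        (‖avgPhaseSum L ((k : ℝ) / L + δ)‖) ^ 2 := by
  obtain rfl | hc2 : c = 1 ∨ 2 ≤ c := by omega
  · simp only [Nat.cast_one, div_one, sub_self]
    exact sum_nonneg fun (k : ℤ) _ => sq_nonneg ‖avgPhaseSum L ((k : ℝ) / L + δ)‖
  have hcover : Ico (-(c : ℤ) + 1) (-(c : ℤ) + 1 + L) ⊆
      Icc (-(c : ℤ) + 1) (c - 1) ∪ Icc (c : ℤ) (L - c) := by
    intro k
    simp only [mem_Ico, mem_union, mem_Icc]
    omega
  have hdisjoint : Disjoint (Icc (-(c : ℤ) + 1) (c - 1)) (Icc (c : ℤ) (L - c)) := by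
    rw [disjoint_left]
    intro k
    simp only [mem_Icc]
    omega
  have hone := (sum_Ico_sq_norm_avgPhaseSum hL δ (-(c : ℤ) + 1)).symm.le.trans
    (sum_le_sum_of_subset_of_nonneg hcover fun k _ _ => sq_nonneg _)
  rw [sum_union hdisjoint] at hone
  have htail := sum_Icc_sq_norm_avgPhaseSum_le (c := c) (by exact_mod_cast hc2) hδ0 hδ1
  push_cast at htail
  linarith
end

section
/- Let N be a positive integer, let f be a real number with 0 < f ≤ 1, and let A be a symmetric N×N real matrix all of whose entries lie in [f²/N, 1/N]. Suppose x : Fin N → ℝ has all entries strictly positive and satisfies A·x = λ·x for some real λ, and suppose moreover that λ is the top of the Rayleigh quotient, i.e. for every z : Fin N → ℝ one has zᵀ A z ≤ λ·‖z‖². Then for every nonzero y : Fin N → ℝ with ∑_α y_α x_α = 0, one has yᵀ A y ≤ (1 − f⁴)·λ·‖y‖². -/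
/-- Spectral gap for a symmetric positive matrix with entries in `[f²/N, 1/N]`:
if `x` is a strictly positive eigenvector with eigenvalue `λ` which maximizes the
Rayleigh quotient, then any nonzero `y` orthogonal to `x` satisfies
`yᵀ A y ≤ (1 − f⁴) λ ‖y‖²`. -/
theorem perron_spectral_gap (N : ℕ) (hN : 0 < N) (f : ℝ) (hf0 : 0 < f) (hf1 : f ≤ 1)
    (A : Matrix (Fin N) (Fin N) ℝ) (hAsymm : A.IsSymm)
    (hA : ∀ α β, A α β ∈ Set.Icc (f ^ 2 / N) (1 / N))
    (x : Fin N → ℝ) (hx : ∀ α, 0 < x α) (lam : ℝ)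
    (hEig : A.mulVec x = lam • x)
    (hRayleigh : ∀ z : Fin N → ℝ, ∑ α, ∑ β, z α * A α β * z β ≤ lam * ∑ α, z α ^ 2)
    (y : Fin N → ℝ) (hy : y ≠ 0) (hortho : ∑ α, y α * x α = 0) :
    ∑ α, ∑ β, y α * A α β * y β ≤ (1 - f ^ 4) * lam * ∑ α, y α ^ 2 := by
  classical
  have hNR : (0:ℝ) < N := by exact_mod_cast hN
  have hne : (Finset.univ : Finset (Fin N)).Nonempty := by
    simpa [Finset.univ_nonempty_iff] using Fin.pos_iff_nonempty.mp hN
  have hn : 0 < ∑ γ, x γ ^ 2 := Finset.sum_pos (fun α _ => pow_pos (hx α) 2) hne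
  have hS : 0 < ∑ γ, x γ := Finset.sum_pos (fun α _ => hx α) hne
  have hrow : ∀ α, ∑ β, A α β * x β = lam * x α := by
    intro α
    have := congrFun hEig α
    simpa [Matrix.mulVec, dotProduct] using this
  have hsym : ∀ α β, A α β = A β α := fun α β => (hAsymm.apply α β).symm
  have hup : ∀ α, (N:ℝ) * (lam * x α) ≤ ∑ γ, x γ := by
    intro α
    rw [← hrow α, Finset.mul_sum]
    apply Finset.sum_le_sum
    intro β _
    have h2 : A α β * N ≤ 1 := (le_div_iff₀ hNR).mp (hA α β).2
    nlinarith [mul_le_mul_of_nonneg_right h2 (hx β).le]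
  have hlow : ∀ α, f ^ 2 * ∑ γ, x γ ≤ (N:ℝ) * (lam * x α) := by
    intro α
    rw [← hrow α, Finset.mul_sum, Finset.mul_sum]
    apply Finset.sum_le_sum
    intro β _
    have h2 : f ^ 2 ≤ A α β * N := (div_le_iff₀ hNR).mp (hA α β).1
    nlinarith [mul_le_mul_of_nonneg_right h2 (hx β).le]
  have hlamn : f ^ 2 * ((∑ γ, x γ) * ∑ γ, x γ) ≤ (N:ℝ) * (lam * ∑ γ, x γ ^ 2) := by
    have e1 : f ^ 2 * ((∑ γ, x γ) * ∑ γ, x γ) = ∑ α, (f ^ 2 * ∑ γ, x γ) * x α := by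
      rw [← Finset.mul_sum]; ring
    have e2 : (N:ℝ) * (lam * ∑ γ, x γ ^ 2) = ∑ α, ((N:ℝ) * (lam * x α)) * x α := by
      simp only [Finset.mul_sum]
      apply Finset.sum_congr rfl
      intro α _; ring
    rw [e1, e2]
    apply Finset.sum_le_sum
    intro α _
    exact mul_le_mul_of_nonneg_right (hlow α) (hx α).le
  have hlam : 0 < lam := by
    nlinarith [mul_pos hS hS, pow_pos hf0 2, mul_pos hNR hn]
  have hC : ∀ α β, 0 ≤ A α β - f ^ 4 * lam * (x α * x β) / ∑ γ, x γ ^ 2 := by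
    intro α β
    rw [sub_nonneg, div_le_iff₀ hn]
    have key : ((N:ℝ) * (lam * x α)) * ((N:ℝ) * (lam * x β)) ≤ (∑ γ, x γ) * ∑ γ, x γ :=
      mul_le_mul (hup α) (hup β)
        (mul_nonneg hNR.le (mul_nonneg hlam.le (hx β).le)) hS.le
    have k3 : f ^ 2 ≤ A α β * N := (div_le_iff₀ hNR).mp (hA α β).1
    have c1 : f ^ 4 * (((N:ℝ) * (lam * x α)) * ((N:ℝ) * (lam * x β)))
        ≤ f ^ 4 * ((∑ γ, x γ) * ∑ γ, x γ) :=
      mul_le_mul_of_nonneg_left key (by positivity)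
    have c2 : f ^ 2 * (f ^ 2 * ((∑ γ, x γ) * ∑ γ, x γ))
        ≤ f ^ 2 * ((N:ℝ) * (lam * ∑ γ, x γ ^ 2)) :=
      mul_le_mul_of_nonneg_left hlamn (by positivity)
    have c3 : f ^ 2 * ((N:ℝ) * (lam * ∑ γ, x γ ^ 2))
        ≤ (A α β * N) * ((N:ℝ) * (lam * ∑ γ, x γ ^ 2)) :=
      mul_le_mul_of_nonneg_right k3
        (mul_nonneg hNR.le (mul_nonneg hlam.le hn.le))
    nlinarith [c1, c2, c3, mul_pos (mul_pos hNR hNR) hlam]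
  have hrowC : ∀ α, ∑ β, (A α β - f ^ 4 * lam * (x α * x β) / ∑ γ, x γ ^ 2) * x β
      = (1 - f ^ 4) * (lam * x α) := by
    intro α
    have e1 : ∑ β, (A α β - f ^ 4 * lam * (x α * x β) / ∑ γ, x γ ^ 2) * x β
        = (∑ β, A α β * x β) - (f ^ 4 * lam * x α / ∑ γ, x γ ^ 2) * ∑ β, x β ^ 2 := by
      rw [Finset.mul_sum, ← Finset.sum_sub_distrib]
      apply Finset.sum_congr rfl
      intro β _
      field_simp
    rw [e1, hrow α]
    field_simp
  have hcolC : ∀ β, ∑ α, (A α β - f ^ 4 * lam * (x α * x β) / ∑ γ, x γ ^ 2) * x α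
      = (1 - f ^ 4) * (lam * x β) := by
    intro β
    rw [← hrowC β]
    apply Finset.sum_congr rfl
    intro α _
    rw [hsym α β]
    ring_nf
  -- decomposition: since y ⟂ x the rank-one part vanishes
  have decomp : ∑ α, ∑ β, y α * A α β * y β
      = ∑ α, ∑ β, y α * (A α β - f ^ 4 * lam * (x α * x β) / ∑ γ, x γ ^ 2) * y β := by
    have zero : ∑ α, ∑ β, y α * (f ^ 4 * lam * (x α * x β) / ∑ γ, x γ ^ 2) * y β = 0 := by
      have e : ∀ α, ∑ β, y α * (f ^ 4 * lam * (x α * x β) / ∑ γ, x γ ^ 2) * y β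
          = (f ^ 4 * lam / ∑ γ, x γ ^ 2) * (y α * x α) * ∑ β, y β * x β := by
        intro α
        rw [Finset.mul_sum]
        apply Finset.sum_congr rfl
        intro β _
        field_simp
      simp only [e, hortho, mul_zero, Finset.sum_const_zero]
    have split : ∀ α, ∑ β, y α * A α β * y β
        = (∑ β, y α * (A α β - f ^ 4 * lam * (x α * x β) / ∑ γ, x γ ^ 2) * y β)
          + ∑ β, y α * (f ^ 4 * lam * (x α * x β) / ∑ γ, x γ ^ 2) * y β := by
      intro α
      rw [← Finset.sum_add_distrib]
      apply Finset.sum_congr rfl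
      intro β _
      ring
    simp only [split, Finset.sum_add_distrib, zero, add_zero]
  rw [decomp]
  -- AM-GM pointwise bound
  have pt : ∀ α β, y α * (A α β - f ^ 4 * lam * (x α * x β) / ∑ γ, x γ ^ 2) * y β
      ≤ (A α β - f ^ 4 * lam * (x α * x β) / ∑ γ, x γ ^ 2)
        * ((y α ^ 2 * (x β / x α) + y β ^ 2 * (x α / x β)) / 2) := by
    intro α β
    have hxa := hx α
    have hxb := hx β
    have h2 : y α * y β ≤ (y α ^ 2 * (x β / x α) + y β ^ 2 * (x α / x β)) / 2 := by
      rw [le_div_iff₀ (by norm_num : (0:ℝ) < 2), ← sub_nonneg]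
      have expand : (y α ^ 2 * (x β / x α) + y β ^ 2 * (x α / x β)) - y α * y β * 2
          = (y α * x β - y β * x α) ^ 2 / (x α * x β) := by
        field_simp
        ring
      rw [expand]
      positivity
    calc y α * (A α β - f ^ 4 * lam * (x α * x β) / ∑ γ, x γ ^ 2) * y β
        = (A α β - f ^ 4 * lam * (x α * x β) / ∑ γ, x γ ^ 2) * (y α * y β) := by ring
      _ ≤ _ := mul_le_mul_of_nonneg_left h2 (hC α β)
  have T1 : ∑ α, ∑ β, (A α β - f ^ 4 * lam * (x α * x β) / ∑ γ, x γ ^ 2)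
        * (y α ^ 2 * (x β / x α))
      = (1 - f ^ 4) * lam * ∑ α, y α ^ 2 := by
    rw [Finset.mul_sum]
    apply Finset.sum_congr rfl
    intro α _
    have e : ∑ β, (A α β - f ^ 4 * lam * (x α * x β) / ∑ γ, x γ ^ 2)
          * (y α ^ 2 * (x β / x α))
        = (y α ^ 2 / x α)
          * ∑ β, (A α β - f ^ 4 * lam * (x α * x β) / ∑ γ, x γ ^ 2) * x β := by
      rw [Finset.mul_sum]
      apply Finset.sum_congr rfl
      intro β _
      ring
    rw [e, hrowC α]
    have hxa := (hx α).ne'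
    field_simp
  have T2 : ∑ α, ∑ β, (A α β - f ^ 4 * lam * (x α * x β) / ∑ γ, x γ ^ 2)
        * (y β ^ 2 * (x α / x β))
      = (1 - f ^ 4) * lam * ∑ β, y β ^ 2 := by
    rw [Finset.sum_comm, Finset.mul_sum]
    apply Finset.sum_congr rfl
    intro β _
    have e : ∑ α, (A α β - f ^ 4 * lam * (x α * x β) / ∑ γ, x γ ^ 2)
          * (y β ^ 2 * (x α / x β))
        = (y β ^ 2 / x β)
          * ∑ α, (A α β - f ^ 4 * lam * (x α * x β) / ∑ γ, x γ ^ 2) * x α := by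
      rw [Finset.mul_sum]
      apply Finset.sum_congr rfl
      intro α _
      ring
    rw [e, hcolC β]
    have hxb := (hx β).ne'
    field_simp
  calc ∑ α, ∑ β, y α * (A α β - f ^ 4 * lam * (x α * x β) / ∑ γ, x γ ^ 2) * y β
      ≤ ∑ α, ∑ β, (A α β - f ^ 4 * lam * (x α * x β) / ∑ γ, x γ ^ 2)
        * ((y α ^ 2 * (x β / x α) + y β ^ 2 * (x α / x β)) / 2) :=
        Finset.sum_le_sum fun α _ => Finset.sum_le_sum fun β _ => pt α β
    _ = ((∑ α, ∑ β, (A α β - f ^ 4 * lam * (x α * x β) / ∑ γ, x γ ^ 2)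
          * (y α ^ 2 * (x β / x α)))
        + ∑ α, ∑ β, (A α β - f ^ 4 * lam * (x α * x β) / ∑ γ, x γ ^ 2)
          * (y β ^ 2 * (x α / x β))) / 2 := by
        rw [← Finset.sum_add_distrib, Finset.sum_div]
        apply Finset.sum_congr rfl
        intro α _
        rw [← Finset.sum_add_distrib, Finset.sum_div]
        apply Finset.sum_congr rfl
        intro β _
        ring
    _ = (1 - f ^ 4) * lam * ∑ α, y α ^ 2 := by
        rw [T1, T2]
        ring
end

section
/- Let n be a positive integer and work with n×n complex matrices acting on EuclideanSpace ℂ (Fin n). Let Ψ be a unit vector, let P = |Ψ⟩⟨Ψ| be the rank-one orthogonal projection onto the span of Ψ, and let λ₀ ≥ Δ > 0 and δ ≥ 0 be real numbers. Let M be a Hermitian matrix with M ⪯ λ₀·P + (λ₀ − Δ)·(I − P) in the Loewner order, and let Q be a Hermitian matrix with 0 ⪯ Q ⪯ I. If φ is a unit vector with Re⟨φ, Q M Q φ⟩ ≥ λ₀ − δ, then |⟨Ψ, Q φ⟩|² ≥ (Δ − δ)/Δ. -/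
/-!
Write `ψ = Qφ` and `t = |⟨Ψ, ψ⟩|²`. Since `Q` is self-adjoint, `⟨φ, QMQφ⟩ = ⟨ψ, Mψ⟩`, and
`0 ⪯ Q ⪯ I` gives `‖ψ‖ ≤ 1`. Testing the majorant of `M` on `ψ` yields, as `λ₀ ≥ Δ`,
`λ₀ - δ ≤ Re⟨ψ, Mψ⟩ ≤ λ₀ t + (λ₀ - Δ)(‖ψ‖² - t) ≤ λ₀ - Δ (1 - t)`, i.e. `Δ - δ ≤ Δ t`.
-/

open scoped ComplexOrder

/-- Loewner order for complex matrices: `A ⪯ B` iff `B − A` is positive semidefinite. -/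
def Matrix.loewnerLE {n : ℕ} (A B : Matrix (Fin n) (Fin n) ℂ) : Prop :=
  (B - A).PosSemidef

open scoped InnerProductSpace
open LinearMap InnerProductSpace RCLike

namespace LinearMap

variable {𝕜 E : Type*} [RCLike 𝕜] [NormedAddCommGroup E] [InnerProductSpace 𝕜 E]

theorem re_inner_apply_le_of_le {A B : E →ₗ[𝕜] E} (h : A ≤ B) (x : E) :
    re ⟪x, A x⟫_𝕜 ≤ re ⟪x, B x⟫_𝕜 := by
  have := ((le_def A B).1 h).re_inner_nonneg_right x
  rw [sub_apply, inner_sub_right, map_sub] at this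
  linarith

theorem norm_apply_le_of_nonneg_of_le_one {T : E →ₗ[𝕜] E} (h0 : 0 ≤ T) (h1 : T ≤ 1) (x : E) :
    ‖T x‖ ≤ ‖x‖ := by
  have hT := (nonneg_iff_isPositive T).1 h0
  -- with `u = x - T x`: `⟪u, T x⟫ = ⟪u, T u⟫ + ⟪(1 - T) (T x), T x⟫`, a sum of two nonnegative terms
  have hsq : ‖T x‖ ^ 2 ≤ re ⟪x, T x⟫_𝕜 := by
    have hu := hT.re_inner_nonneg_right (x - T x)
    have hv : 0 ≤ re ⟪T x - T (T x), T x⟫_𝕜 := by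
      simpa using ((le_def T 1).1 h1).re_inner_nonneg_left (T x)
    have key : ⟪x, T x⟫_𝕜 - ⟪T x, T x⟫_𝕜
        = ⟪x - T x, T (x - T x)⟫_𝕜 + ⟪T x - T (T x), T x⟫_𝕜 :=
      calc ⟪x, T x⟫_𝕜 - ⟪T x, T x⟫_𝕜
          = ⟪x - T x, T (x - T x) + T (T x)⟫_𝕜 := by
            rw [inner_sub_left, ← map_add, sub_add_cancel]
        _ = _ := by rw [inner_add_right, ← hT.isSymmetric (x - T x) (T x), map_sub]
    have := congrArg re key
    rw [map_sub, map_add, inner_self_eq_norm_sq] at this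
    linarith
  have hle : re ⟪x, T x⟫_𝕜 ≤ ‖x‖ ^ 2 := by
    simpa only [Module.End.one_apply, inner_self_eq_norm_sq] using re_inner_apply_le_of_le h1 x
  exact (pow_le_pow_iff_left₀ (norm_nonneg _) (norm_nonneg _) two_ne_zero).1 (hsq.trans hle)

theorem re_inner_rankOne_self_apply (Ψ x : E) :
    re ⟪x, rankOne 𝕜 Ψ Ψ x⟫_𝕜 = ‖⟪Ψ, x⟫_𝕜‖ ^ 2 := by
  rw [rankOne_apply, inner_smul_right, ← inner_conj_symm Ψ x, RCLike.conj_mul, ← ofReal_pow,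
    ofReal_re, norm_conj]

theorem re_inner_apply_le_of_le_gapped {A : E →ₗ[𝕜] E} {Ψ ψ : E} {μ Δ : ℝ}
    (hA : A ≤ (μ : 𝕜) • (rankOne 𝕜 Ψ Ψ : E →L[𝕜] E).toLinearMap
      + ((μ : 𝕜) - Δ) • (1 - (rankOne 𝕜 Ψ Ψ : E →L[𝕜] E).toLinearMap))
    (hΔ : Δ ≤ μ) (hψ : ‖ψ‖ ≤ 1) :
    re ⟪ψ, A ψ⟫_𝕜 ≤ μ - Δ * (1 - ‖⟪Ψ, ψ⟫_𝕜‖ ^ 2) := by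
  have hquad := re_inner_apply_le_of_le hA ψ
  simp only [add_apply, smul_apply, sub_apply, Module.End.one_apply, ContinuousLinearMap.coe_coe,
    inner_add_right, inner_smul_right, inner_sub_right] at hquad
  rw [← ofReal_sub, map_add, re_ofReal_mul, re_ofReal_mul, map_sub, inner_self_eq_norm_sq,
    re_inner_rankOne_self_apply] at hquad
  have : ‖ψ‖ ^ 2 ≤ 1 := pow_le_one₀ (norm_nonneg _) hψ
  nlinarith

end LinearMap

namespace Matrix

theorem loewnerLE_iff_toEuclideanLin_le {n : ℕ} {A B : Matrix (Fin n) (Fin n) ℂ} :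
    loewnerLE A B ↔ toEuclideanLin A ≤ toEuclideanLin B := by
  rw [loewnerLE, le_def, ← map_sub, isPositive_toEuclideanLin_iff]

theorem toEuclideanLin_of_mul_conj_eq_rankOne {𝕜 ι : Type*} [RCLike 𝕜] [Fintype ι]
    [DecidableEq ι] (Ψ : EuclideanSpace 𝕜 ι) :
    toEuclideanLin (of fun i j => Ψ i * starRingEnd 𝕜 (Ψ j))
      = (rankOne 𝕜 Ψ Ψ : EuclideanSpace 𝕜 ι →L[𝕜] EuclideanSpace 𝕜 ι).toLinearMap := by
  apply toEuclideanLin.symm.injective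
  rw [symm_toEuclideanLin_rankOne, LinearEquiv.symm_apply_apply]
  rfl

end Matrix

theorem near_top_eigenvector_overlap_general (n : ℕ)
    (Ψ : EuclideanSpace ℂ (Fin n))
    (P M Q : Matrix (Fin n) (Fin n) ℂ)
    (hP : P = Matrix.of fun i j => Ψ i * starRingEnd ℂ (Ψ j))
    (lam0 Δ δ : ℝ) (hΔ : 0 < Δ) (hlam : Δ ≤ lam0)
    (hMle : Matrix.loewnerLE M ((lam0 : ℂ) • P + ((lam0 : ℂ) - (Δ : ℂ)) • (1 - P)))
    (hQ0 : Matrix.loewnerLE 0 Q) (hQ1 : Matrix.loewnerLE Q 1)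
    (φ : EuclideanSpace ℂ (Fin n)) (hφ : ‖φ‖ = 1)
    (h : lam0 - δ ≤ (inner ℂ φ (Matrix.toEuclideanLin (Q * M * Q) φ) : ℂ).re) :
    (Δ - δ) / Δ ≤ ‖(inner ℂ Ψ (Matrix.toEuclideanLin Q φ) : ℂ)‖ ^ 2 := by
  set q := Matrix.toEuclideanLin Q
  have hq0 : 0 ≤ q := by simpa using Matrix.loewnerLE_iff_toEuclideanLin_le.1 hQ0
  have hq1 : q ≤ 1 := by
    simpa [Module.End.one_eq_id] using Matrix.loewnerLE_iff_toEuclideanLin_le.1 hQ1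
  have hA := Matrix.loewnerLE_iff_toEuclideanLin_le.1 hMle
  simp only [map_add, map_smul, map_sub, hP, Matrix.toEuclideanLin_of_mul_conj_eq_rankOne,
    Matrix.toLpLin_one, ← Module.End.one_eq_id] at hA
  have hQMQ : inner ℂ φ (Matrix.toEuclideanLin (Q * M * Q) φ)
      = inner ℂ (q φ) (Matrix.toEuclideanLin M (q φ)) := by
    simp only [Matrix.toLpLin_mul_same, LinearMap.comp_apply]
    exact ((LinearMap.nonneg_iff_isPositive q).1 hq0).isSymmetric _ _ |>.symm
  have hψ : ‖q φ‖ ≤ 1 := (LinearMap.norm_apply_le_of_nonneg_of_le_one hq0 hq1 φ).trans hφ.le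
  have hgap := LinearMap.re_inner_apply_le_of_le_gapped hA hlam hψ
  rw [hQMQ] at h
  rw [div_le_iff₀ hΔ]
  simp only [RCLike.re_to_complex] at hgap
  linarith

/-- If `M ⪯ λ₀ |Ψ⟩⟨Ψ| + (λ₀−Δ)(I − |Ψ⟩⟨Ψ|)` and `0 ⪯ Q ⪯ I`, then any unit vector `φ`
with `Re⟨φ, QMQ φ⟩ ≥ λ₀ − δ` satisfies `|⟨Ψ, Qφ⟩|² ≥ (Δ−δ)/Δ`. -/
theorem near_top_eigenvector_overlap (n : ℕ) (hn : 0 < n)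
    (Ψ : EuclideanSpace ℂ (Fin n)) (hΨ : ‖Ψ‖ = 1)
    (P M Q : Matrix (Fin n) (Fin n) ℂ)
    (hP : P = Matrix.of fun i j => Ψ i * starRingEnd ℂ (Ψ j))
    (lam0 Δ δ : ℝ) (hΔ : 0 < Δ) (hlam : Δ ≤ lam0) (hδ : 0 ≤ δ)
    (hM : M.IsHermitian)
    (hMle : Matrix.loewnerLE M ((lam0 : ℂ) • P + ((lam0 : ℂ) - (Δ : ℂ)) • (1 - P)))
    (hQ : Q.IsHermitian) (hQ0 : Matrix.loewnerLE 0 Q) (hQ1 : Matrix.loewnerLE Q 1)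
    (φ : EuclideanSpace ℂ (Fin n)) (hφ : ‖φ‖ = 1)
    (h : lam0 - δ ≤ (inner ℂ φ (Matrix.toEuclideanLin (Q * M * Q) φ) : ℂ).re) :
    (Δ - δ) / Δ ≤ ‖(inner ℂ Ψ (Matrix.toEuclideanLin Q φ) : ℂ)‖ ^ 2 :=
  near_top_eigenvector_overlap_general n Ψ P M Q hP lam0 Δ δ hΔ hlam hMle hQ0 hQ1 φ hφ h
end
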